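/- The kernel of the Fokker–Planck operator Ã₂ on 2π-periodic C² functions is one-dimensional, spanned by w: one has Ã₂w(θ) = 0 for all θ, and conversely every 2π-periodic C² function v : ℝ → ℝ with Ã₂v(θ) = 0 for all θ satisfies v = (∫₀^{2π} v)·w. -/

import Mathlib

/-!
`Ã₂ v` is the derivative of the current `J = v'/2 + K r₀ sin · v`, so on the kernel `J` is a
constant `c`. Then `(e^Φ v)' = 2 c e^Φ`, and since `e^Φ v` is `2π`-periodic, Rolle's theorem
forces `c = 0`. Hence `e^Φ v` is constant, i.e. `v = C e^{-Φ}`, and integrating over a period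
identifies `C e^{-Φ}` with `(∫₀^{2π} v) · w`.
-/

noncomputable section

open MeasureTheory

/-- `Ψ₀(x)`: the non-disordered fixed-point function. -/
def Psi0 (x : ℝ) : ℝ :=
  (∫ θ in (0:ℝ)..(2 * Real.pi), Real.cos θ * Real.exp (x * Real.cos θ)) /
    (∫ θ in (0:ℝ)..(2 * Real.pi), Real.exp (x * Real.cos θ))

/-- The potential `Φ(θ) = −2Kr₀·cos θ`. -/
def Phi (K r₀ θ : ℝ) : ℝ := -2 * K * r₀ * Real.cos θ

/-- The weight `w(θ) = exp(−Φ(θ))/∫₀^{2π} exp(−Φ)`. -/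
def w (K r₀ θ : ℝ) : ℝ :=
  Real.exp (-Phi K r₀ θ) / (∫ u in (0:ℝ)..(2 * Real.pi), Real.exp (-Phi K r₀ u))

/-- The Fokker–Planck operator `Ã₂v = (1/2)v'' + (Kr₀ sin(θ) v)'`. -/
def A2 (K r₀ : ℝ) (v : ℝ → ℝ) (θ : ℝ) : ℝ :=
  (1 / 2) * deriv (deriv v) θ + deriv (fun u => K * r₀ * Real.sin u * v u) θ

/-- The `2π`-periodic primitive of a zero-mean `a`, normalized so that
`∫₀^{2π} 𝒜/k = 0` for the weight `k`. -/
def prim (k a : ℝ → ℝ) (θ : ℝ) : ℝ :=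
  (∫ u in (0:ℝ)..θ, a u) -
    (∫ s in (0:ℝ)..(2 * Real.pi), (∫ u in (0:ℝ)..s, a u) / k s) /
      (∫ s in (0:ℝ)..(2 * Real.pi), 1 / k s)

/-- `v₀ = v − (∫₀^{2π} v)·w`, the zero-mean part of `v`. -/
def vz (K r₀ : ℝ) (v : ℝ → ℝ) (θ : ℝ) : ℝ :=
  v θ - (∫ u in (0:ℝ)..(2 * Real.pi), v u) * w K r₀ θ

/-- The weighted Sobolev inner product `⟨u, v⟩_{−1,w}`. -/
def pairW (K r₀ : ℝ) (u v : ℝ → ℝ) : ℝ :=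
  (∫ θ in (0:ℝ)..(2 * Real.pi), u θ) * (∫ θ in (0:ℝ)..(2 * Real.pi), v θ) +
    ∫ θ in (0:ℝ)..(2 * Real.pi),
      prim (w K r₀) (vz K r₀ u) θ * prim (w K r₀) (vz K r₀ v) θ / w K r₀ θ

open Real

section LinearODE

variable {φ φ' v : ℝ → ℝ}

theorem hasDerivAt_exp_mul (hφ : ∀ x, HasDerivAt φ (φ' x) x) (hv : Differentiable ℝ v)
    (x : ℝ) :
    HasDerivAt (fun x => exp (φ x) * v x) (exp (φ x) * (deriv v x + φ' x * v x)) x :=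
  ((hφ x).exp.mul (hv x).hasDerivAt).congr_deriv (by ring)

theorem eq_zero_of_periodic_of_deriv_add_mul_eq {T c : ℝ} (hT : 0 < T)
    (hφ : ∀ x, HasDerivAt φ (φ' x) x) (hφT : Function.Periodic φ T)
    (hv : Differentiable ℝ v) (hvT : Function.Periodic v T)
    (hc : ∀ x, deriv v x + φ' x * v x = c) : c = 0 := by
  have hcont : Continuous fun x => exp (φ x) * v x :=
    continuous_iff_continuousAt.2 fun x => (hasDerivAt_exp_mul hφ hv x).continuousAt
  obtain ⟨ξ, -, hξ⟩ := exists_hasDerivAt_eq_zero hT hcont.continuousOn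
    (by simp only [hφT.eq, hvT.eq]) fun x _ => hasDerivAt_exp_mul hφ hv x
  rw [hc] at hξ
  exact (mul_eq_zero.1 hξ).resolve_left (exp_pos _).ne'

theorem eq_mul_exp_neg_of_deriv_add_mul_eq_zero (hφ : ∀ x, HasDerivAt φ (φ' x) x)
    (hv : Differentiable ℝ v) (h : ∀ x, deriv v x + φ' x * v x = 0) (x : ℝ) :
    v x = exp (φ 0) * v 0 * exp (-φ x) := by
  have hconst := is_const_of_deriv_eq_zero
    (fun x => (hasDerivAt_exp_mul hφ hv x).differentiableAt)
    (fun x => by rw [(hasDerivAt_exp_mul hφ hv x).deriv, h, mul_zero]) x 0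
  rw [← hconst, mul_comm, ← mul_assoc, ← exp_add, neg_add_cancel, exp_zero, one_mul]

end LinearODE

theorem hasDerivAt_Phi (K r₀ x : ℝ) :
    HasDerivAt (Phi K r₀) (2 * K * r₀ * sin x) x :=
  ((hasDerivAt_cos x).const_mul (-2 * K * r₀)).congr_deriv (by ring)

theorem Phi_periodic (K r₀ : ℝ) : Function.Periodic (Phi K r₀) (2 * π) := fun x => by
  simp only [Phi, cos_add_two_pi]

theorem integral_exp_neg_Phi_pos (K r₀ : ℝ) :
    0 < ∫ u in (0:ℝ)..(2 * π), exp (-Phi K r₀ u) :=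
  intervalIntegral.intervalIntegral_pos_of_pos
    (by unfold Phi; exact Continuous.intervalIntegrable (by fun_prop) _ _)
    (fun _ => exp_pos _) two_pi_pos

theorem contDiff_w (K r₀ : ℝ) : ContDiff ℝ 2 (w K r₀) := by
  unfold w Phi; fun_prop

def flux (K r₀ : ℝ) (v : ℝ → ℝ) (θ : ℝ) : ℝ :=
  (1 / 2) * deriv v θ + K * r₀ * sin θ * v θ

theorem hasDerivAt_flux {K r₀ : ℝ} {v : ℝ → ℝ} (hv : ContDiff ℝ 2 v) (θ : ℝ) :
    HasDerivAt (flux K r₀ v) (A2 K r₀ v θ) θ :=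
  ((hv.differentiable_deriv_two θ).hasDerivAt.const_mul _).add
    (((differentiable_sin.const_mul _).mul (hv.differentiable two_ne_zero)) θ).hasDerivAt

theorem two_mul_flux (K r₀ : ℝ) (v : ℝ → ℝ) (θ : ℝ) :
    2 * flux K r₀ v θ = deriv v θ + 2 * K * r₀ * sin θ * v θ := by
  unfold flux; ring

theorem hasDerivAt_w (K r₀ θ : ℝ) :
    HasDerivAt (w K r₀) (-(2 * K * r₀ * sin θ) * w K r₀ θ) θ :=
  ((hasDerivAt_Phi K r₀ θ).neg.exp.div_const _).congr_deriv (by rw [w, Pi.neg_apply]; ring)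

theorem flux_w (K r₀ : ℝ) : flux K r₀ (w K r₀) = 0 := funext fun θ => by
  rw [flux, (hasDerivAt_w K r₀ θ).deriv, Pi.zero_apply]
  ring

theorem A2_w_eq_zero (K r₀ θ : ℝ) : A2 K r₀ (w K r₀) θ = 0 := by
  rw [← (hasDerivAt_flux (contDiff_w K r₀) θ).deriv, flux_w]
  exact deriv_const θ 0

theorem eq_integral_mul_w_of_eq_const_mul {K r₀ C : ℝ} {v : ℝ → ℝ}
    (hv : ∀ x, v x = C * exp (-Phi K r₀ x)) (θ : ℝ) :
    v θ = (∫ u in (0:ℝ)..(2 * π), v u) * w K r₀ θ := by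
  have hZ := (integral_exp_neg_Phi_pos K r₀).ne'
  rw [intervalIntegral.integral_congr fun x _ => hv x, intervalIntegral.integral_const_mul,
    hv θ, w]
  field_simp

theorem eq_integral_mul_w_of_A2_eq_zero {K r₀ : ℝ} {v : ℝ → ℝ} (hv : ContDiff ℝ 2 v)
    (hvT : Function.Periodic v (2 * π)) (hA : ∀ θ, A2 K r₀ v θ = 0) (θ : ℝ) :
    v θ = (∫ u in (0:ℝ)..(2 * π), v u) * w K r₀ θ := by
  have hv₁ := hv.differentiable two_ne_zero
  have hJ (x : ℝ) : flux K r₀ v x = flux K r₀ v 0 :=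
    is_const_of_deriv_eq_zero (fun x => (hasDerivAt_flux hv x).differentiableAt)
      (fun x => (hasDerivAt_flux hv x).deriv.trans (hA x)) x 0
  have hc (x : ℝ) : deriv v x + 2 * K * r₀ * sin x * v x = 2 * flux K r₀ v 0 := by
    rw [← hJ x, two_mul_flux]
  have hJ₀ := eq_zero_of_periodic_of_deriv_add_mul_eq two_pi_pos (hasDerivAt_Phi K r₀)
    (Phi_periodic K r₀) hv₁ hvT hc
  exact eq_integral_mul_w_of_eq_const_mul (eq_mul_exp_neg_of_deriv_add_mul_eq_zero
    (hasDerivAt_Phi K r₀) hv₁ fun x => (hc x).trans hJ₀) θ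

theorem stmt14_general (K r₀ : ℝ) :
    (∀ θ : ℝ, A2 K r₀ (w K r₀) θ = 0) ∧
      ∀ v : ℝ → ℝ, ContDiff ℝ 2 v → Function.Periodic v (2 * Real.pi) →
        (∀ θ : ℝ, A2 K r₀ v θ = 0) →
        ∀ θ : ℝ, v θ = (∫ u in (0:ℝ)..(2 * Real.pi), v u) * w K r₀ θ :=
  ⟨A2_w_eq_zero K r₀, fun _ hv hvT hA => eq_integral_mul_w_of_A2_eq_zero hv hvT hA⟩

/-- The kernel of the Fokker–Planck operator on `2π`-periodic `C²` functions is
one-dimensional, spanned by the weight `w`. -/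
theorem stmt14 (K r₀ : ℝ) (hK : 1 < K) (hr₀ : 0 < r₀) (hfix : r₀ = Psi0 (2 * K * r₀)) :
    (∀ θ : ℝ, A2 K r₀ (w K r₀) θ = 0) ∧
      ∀ v : ℝ → ℝ, ContDiff ℝ 2 v → Function.Periodic v (2 * Real.pi) →
        (∀ θ : ℝ, A2 K r₀ v θ = 0) →
        ∀ θ : ℝ, v θ = (∫ u in (0:ℝ)..(2 * Real.pi), v u) * w K r₀ θ :=
  stmt14_general K r₀
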